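/- Let A be an NBW with n ≥ 1 states over an alphabet Σ. For every u ∈ Σ*, the relation ≈ᵒᵤ has index at most nⁿ·(n+1)ⁿ, i.e., ≈ᵒᵤ has at most nⁿ·(n+1)ⁿ equivalence classes on Σ*. -/

import Mathlib

open scoped Classical

/-- A nondeterministic Büchi automaton over alphabet `α` with state type `Q`. -/
structure NBW (α : Type) (Q : Type) where
  I : Set Q
  δ : Q → α → Set Q
  F : Set Q

namespace NBW

variable {α Q : Type}

/-- One-step successor set: `δ(S, a) = ⋃_{q ∈ S} δ(q, a)`. -/
def δStep (A : NBW α Q) (S : Set Q) (a : α) : Set Q := ⋃ q ∈ S, A.δ q a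

/-- Extension of `δ` to finite words: `δ(S, ε) = S`, `δ(S, ua) = δ(δ(S, u), a)`. -/
def δSet (A : NBW α Q) (S : Set Q) (u : List α) : Set Q := u.foldl A.δStep S

/-- `A.Reach q u r` means `q →ᵘ r`: there is a run of `A` over `u` from `q` to `r`. -/
def Reach (A : NBW α Q) : Q → List α → Q → Prop
  | q, [], r => q = r
  | q, a :: u, r => ∃ p ∈ A.δ q a, A.Reach p u r

/-- `A.FReach q u r` means `q ⇒ᵘ r`: there is a run of `A` over `u` from `q` to `r`
visiting some accepting state. -/
def FReach (A : NBW α Q) : Q → List α → Q → Prop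
  | q, [], r => q = r ∧ q ∈ A.F
  | q, a :: u, r =>
      (q ∈ A.F ∧ ∃ p ∈ A.δ q a, A.Reach p u r) ∨ ∃ p ∈ A.δ q a, A.FReach p u r

/-- The classical congruence `∼`:  `u₁ ∼ u₂` iff for all states `q, r`,
`q →^{u₁} r ↔ q →^{u₂} r` and `q ⇒^{u₁} r ↔ q ⇒^{u₂} r`. -/
def canoEq (A : NBW α Q) (u₁ u₂ : List α) : Prop :=
  ∀ q r : Q, (A.Reach q u₁ r ↔ A.Reach q u₂ r) ∧ (A.FReach q u₁ r ↔ A.FReach q u₂ r)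

/-- The `∼`-equivalence class of `u`. -/
def canoClass (A : NBW α Q) (u : List α) : Set (List α) := {x | A.canoEq u x}

/-- The right congruence `∼ⁱ`: `u₁ ∼ⁱ u₂` iff `δ(I, u₁) = δ(I, u₂)`. -/
def iEq (A : NBW α Q) (u₁ u₂ : List α) : Prop := A.δSet A.I u₁ = A.δSet A.I u₂

/-- The `∼ⁱ`-equivalence class of `u`. -/
def iClass (A : NBW α Q) (u : List α) : Set (List α) := {x | A.iEq u x}

/-- The relation `≈ᵤ`: `v₁ ≈ᵤ v₂` iff for all `q ∈ δ(I, u)` and all states `r`,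
`q →^{v₁} r ↔ q →^{v₂} r` and `q ⇒^{v₁} r ↔ q ⇒^{v₂} r`. -/
def proEq (A : NBW α Q) (u v₁ v₂ : List α) : Prop :=
  ∀ q ∈ A.δSet A.I u, ∀ r : Q,
    (A.Reach q v₁ r ↔ A.Reach q v₂ r) ∧ (A.FReach q v₁ r ↔ A.FReach q v₂ r)

/-- The `≈ᵤ`-equivalence class of `v`. -/
def proClass (A : NBW α Q) (u v : List α) : Set (List α) := {x | A.proEq u v x}

/-- Büchi acceptance of an ω-word `w : ℕ → α`. -/
def AcceptsOmega (A : NBW α Q) (w : ℕ → α) : Prop :=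
  ∃ ρ : ℕ → Q, ρ 0 ∈ A.I ∧ (∀ i, ρ (i + 1) ∈ A.δ (ρ i) (w i)) ∧
    ∀ n, ∃ i, n ≤ i ∧ ρ i ∈ A.F

/-- The ω-language of `A`. -/
def L (A : NBW α Q) : Set (ℕ → α) := {w | A.AcceptsOmega w}

end NBW

/-- Elementwise concatenation of two languages of finite words. -/
def Lang.concat {α : Type} (X Y : Set (List α)) : Set (List α) :=
  {z | ∃ x ∈ X, ∃ y ∈ Y, z = x ++ y}

/-- `OmegaLang U V` is the set of ω-words of the form `u₀ v₁ v₂ ⋯` with `u₀ ∈ U`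
and each `vᵢ` a nonempty word in `V`: every finite prefix `u₀ v₁ ⋯ v_k` is a
prefix of `w`. -/
def OmegaLang {α : Type} (U V : Set (List α)) : Set (ℕ → α) :=
  {w | ∃ u₀ ∈ U, ∃ vs : ℕ → List α,
    (∀ i, vs i ≠ [] ∧ vs i ∈ V) ∧
    ∀ k : ℕ,
      u₀ ++ ((List.range k).map vs).flatten =
        List.ofFn fun i : Fin (u₀ ++ ((List.range k).map vs).flatten).length => w i.1}

/-- The ω-language `[u]_∼ [v]_∼^ω` is proper if `[u][v] ⊆ [u]` and `[v][v] ⊆ [v]`. -/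
def IsProper {α Q : Type} (A : NBW α Q) (u v : List α) : Prop :=
  Lang.concat (A.canoClass u) (A.canoClass v) ⊆ A.canoClass u ∧
  Lang.concat (A.canoClass v) (A.canoClass v) ⊆ A.canoClass v

/-- Drop empty sets from a list of sets. -/
noncomputable def filterNonempty {Q : Type} : List (Set Q) → List (Set Q)
  | [] => []
  | S :: rest => if S = ∅ then filterNonempty rest else S :: filterNonempty rest

/-- Replace each entry by itself minus the union of all later entries
(keep only the rightmost occurrence of each state). -/
def pruneRight {Q : Type} : List (Set Q) → List (Set Q)
  | [] => []
  | S :: rest => (S \ rest.foldr (· ∪ ·) ∅) :: pruneRight rest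

namespace NBW

variable {α Q : Type}

/-- The ordered `a`-successor `φ(⟨S₁, …, S_k⟩, a)`: split each `δ(S_j, a)` into its
non-accepting part followed by its accepting part, keep only the rightmost
occurrence of each state, and delete empty entries. -/
noncomputable def stepP (A : NBW α Q) (P : List (Set Q)) (a : α) : List (Set Q) :=
  filterNonempty (pruneRight
    ((P.map fun S => [A.δStep S a \ A.F, A.δStep S a ∩ A.F]).flatten))

/-- The initial ordered partition `P₀ = ⟨I∖F, I∩F⟩` with empty entries deleted. -/
noncomputable def P0 (A : NBW α Q) : List (Set Q) :=
  filterNonempty [A.I \ A.F, A.I ∩ A.F]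

/-- Extension of `φ` to finite words. -/
noncomputable def phi (A : NBW α Q) (P : List (Set Q)) (u : List α) : List (Set Q) :=
  u.foldl A.stepP P

/-- The right congruence `∼ᵒ`: `u₁ ∼ᵒ u₂` iff `φ(P₀, u₁) = φ(P₀, u₂)`. -/
def oEq (A : NBW α Q) (u₁ u₂ : List α) : Prop := A.phi A.P0 u₁ = A.phi A.P0 u₂

/-- The `∼ᵒ`-equivalence class of `u`. -/
def oClass (A : NBW α Q) (u : List α) : Set (List α) := {x | A.oEq u x}

/-- `max { j | ∃ p ∈ S_j, p →^v q }` for an ordered partition `P = ⟨S₀, S₁, …⟩`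
(indices 0-based). -/
noncomputable def maxRank (A : NBW α Q) (P : List (Set Q)) (v : List α) (q : Q) : ℕ :=
  sSup {j | ∃ p ∈ P.getD j ∅, A.Reach p v q}

/-- The relation `≈ᵒᵤ`: `v₁ ≈ᵒᵤ v₂` iff `uv₁ ∼ᵒ uv₂` and, writing
`φ(P₀, u) = ⟨S₁, …, S_k⟩`, for every `q ∈ δ(I, uv₁)` the maximal index `j` with
`∃ p ∈ S_j, p →^{v₁} q` equals the maximal index `j` with `∃ p ∈ S_j, p →^{v₂} q`. -/
def oproEq (A : NBW α Q) (u v₁ v₂ : List α) : Prop :=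
  A.oEq (u ++ v₁) (u ++ v₂) ∧
  ∀ q ∈ A.δSet A.I (u ++ v₁),
    A.maxRank (A.phi A.P0 u) v₁ q = A.maxRank (A.phi A.P0 u) v₂ q

/-- The `≈ᵒᵤ`-equivalence class of `v`. -/
def oproClass (A : NBW α Q) (u v : List α) : Set (List α) := {x | A.oproEq u v x}

end NBW

section OproAux

open NBW

variable {α Q : Type}

/-- Union of the entries of a list of sets. -/
def unionL (P : List (Set Q)) : Set Q := P.foldr (· ∪ ·) ∅

lemma unionL_nil : unionL ([] : List (Set Q)) = ∅ := rfl

lemma unionL_cons (S : Set Q) (P : List (Set Q)) :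
    unionL (S :: P) = S ∪ unionL P := rfl

/-- Goodness: every entry is nonempty, and entries are pairwise disjoint. -/
def Good (P : List (Set Q)) : Prop :=
  (∀ S ∈ P, S.Nonempty) ∧ P.Pairwise Disjoint

lemma mem_unionL {P : List (Set Q)} {q : Q} : q ∈ unionL P ↔ ∃ S ∈ P, q ∈ S := by
  induction P with
  | nil => simp [unionL_nil]
  | cons S rest ih => simp [unionL_cons, ih]

lemma subset_unionL {P : List (Set Q)} {S : Set Q} (h : S ∈ P) : S ⊆ unionL P :=
  fun q hq => mem_unionL.2 ⟨S, h, hq⟩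

lemma unionL_append (P₁ P₂ : List (Set Q)) :
    unionL (P₁ ++ P₂) = unionL P₁ ∪ unionL P₂ := by
  induction P₁ with
  | nil => simp [unionL_nil, unionL_cons]
  | cons S rest ih => simp [unionL_cons, ih, Set.union_assoc]

lemma filterNonempty_sublist (P : List (Set Q)) : List.Sublist (filterNonempty P) P := by
  induction P with
  | nil => simp [filterNonempty]
  | cons S rest ih =>
    rw [filterNonempty]
    split
    · exact ih.cons _
    · exact ih.cons₂ _

lemma unionL_filterNonempty (P : List (Set Q)) :
    unionL (filterNonempty P) = unionL P := by
  induction P with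
  | nil => rfl
  | cons S rest ih =>
    rw [filterNonempty]
    split
    · rename_i h
      rw [ih, unionL_cons, h]
      simp
    · rw [unionL_cons, unionL_cons, ih]

lemma nonempty_of_mem_filterNonempty {P : List (Set Q)} {S : Set Q}
    (h : S ∈ filterNonempty P) : S.Nonempty := by
  induction P with
  | nil => simp [filterNonempty] at h
  | cons T rest ih =>
    rw [filterNonempty] at h
    split at h
    · exact ih h
    · rcases List.mem_cons.1 h with rfl | h
      · rename_i hne
        exact Set.nonempty_iff_ne_empty.2 hne
      · exact ih h

lemma pruneRight_cons (S : Set Q) (P : List (Set Q)) :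
    pruneRight (S :: P) = (S \ unionL P) :: pruneRight P := rfl

lemma unionL_pruneRight (P : List (Set Q)) : unionL (pruneRight P) = unionL P := by
  induction P with
  | nil => rfl
  | cons S rest ih =>
    rw [pruneRight_cons, unionL_cons, unionL_cons, ih, Set.diff_union_self]

lemma pairwise_pruneRight (P : List (Set Q)) : (pruneRight P).Pairwise Disjoint := by
  induction P with
  | nil => simp [pruneRight]
  | cons S rest ih =>
    rw [pruneRight_cons]
    refine List.Pairwise.cons ?_ ih
    intro T hT
    have hT' : T ⊆ unionL rest := (unionL_pruneRight rest) ▸ subset_unionL hT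
    exact (Set.disjoint_sdiff_left).mono_right hT'

lemma δStep_union (A : NBW α Q) (S T : Set Q) (a : α) :
    A.δStep (S ∪ T) a = A.δStep S a ∪ A.δStep T a := by
  ext x
  simp only [NBW.δStep, Set.mem_iUnion, Set.mem_union]
  constructor
  · rintro ⟨q, hq | hq, hx⟩
    · exact Or.inl ⟨q, hq, hx⟩
    · exact Or.inr ⟨q, hq, hx⟩
  · rintro (⟨q, hq, hx⟩ | ⟨q, hq, hx⟩)
    · exact ⟨q, Or.inl hq, hx⟩
    · exact ⟨q, Or.inr hq, hx⟩

lemma δStep_empty (A : NBW α Q) (a : α) : A.δStep ∅ a = ∅ := by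
  simp [NBW.δStep]

lemma unionL_pairs (A : NBW α Q) (P : List (Set Q)) (a : α) :
    unionL ((P.map fun S => [A.δStep S a \ A.F, A.δStep S a ∩ A.F]).flatten)
      = A.δStep (unionL P) a := by
  induction P with
  | nil => simp [unionL_nil, δStep_empty]
  | cons S rest ih =>
    rw [List.map_cons, List.flatten_cons, unionL_append, ih, unionL_cons S rest,
      δStep_union, unionL_cons, unionL_cons, unionL_nil, Set.union_empty,
      Set.diff_union_inter]

lemma unionL_stepP (A : NBW α Q) (P : List (Set Q)) (a : α) :
    unionL (A.stepP P a) = A.δStep (unionL P) a := by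
  rw [NBW.stepP, unionL_filterNonempty, unionL_pruneRight, unionL_pairs]

lemma good_stepP (A : NBW α Q) (P : List (Set Q)) (a : α) : Good (A.stepP P a) := by
  constructor
  · intro S hS
    exact nonempty_of_mem_filterNonempty hS
  · rw [NBW.stepP]
    exact (pairwise_pruneRight _).sublist (filterNonempty_sublist _)

lemma phi_good_union (A : NBW α Q) (w : List α) :
    ∀ P : List (Set Q), Good P →
      Good (A.phi P w) ∧ unionL (A.phi P w) = A.δSet (unionL P) w := by
  induction w with
  | nil => intro P hP; exact ⟨hP, rfl⟩
  | cons a w ih =>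
    intro P hP
    have h1 : Good (A.stepP P a) := good_stepP A P a
    have h2 := ih (A.stepP P a) h1
    refine ⟨h2.1, ?_⟩
    have : A.phi P (a :: w) = A.phi (A.stepP P a) w := rfl
    rw [this, h2.2, unionL_stepP]
    rfl

lemma good_P0 (A : NBW α Q) : Good (A.P0 : List (Set Q)) := by
  constructor
  · intro S hS
    exact nonempty_of_mem_filterNonempty hS
  · rw [NBW.P0]
    refine ((?_ : ([A.I \ A.F, A.I ∩ A.F] : List (Set Q)).Pairwise Disjoint)).sublist
      (filterNonempty_sublist _)
    refine List.Pairwise.cons ?_ (by simp)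
    intro T hT
    rcases List.mem_singleton.1 hT with rfl
    exact (Set.disjoint_sdiff_left).mono_right Set.inter_subset_right

lemma unionL_P0 (A : NBW α Q) : unionL A.P0 = A.I := by
  rw [NBW.P0, unionL_filterNonempty, unionL_cons, unionL_cons, unionL_nil,
    Set.union_empty, Set.diff_union_inter]

lemma good_phi (A : NBW α Q) (w : List α) : Good (A.phi A.P0 w) :=
  (phi_good_union A w A.P0 (good_P0 A)).1

lemma unionL_phi (A : NBW α Q) (w : List α) : unionL (A.phi A.P0 w) = A.δSet A.I w := by
  rw [(phi_good_union A w A.P0 (good_P0 A)).2, unionL_P0]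

lemma Good.length_le [Fintype Q] {P : List (Set Q)} (h : Good P) :
    P.length ≤ Fintype.card Q := by
  have hd := List.pairwise_iff_getElem.1 h.2
  have hne : ∀ i : Fin P.length, (P[i.1]'i.2).Nonempty :=
    fun i => h.1 _ (List.getElem_mem i.2)
  choose f hf using hne
  have hinj : Function.Injective f := by
    intro i j hij
    by_contra hnij
    have hij' : i.1 ≠ j.1 := fun hh => hnij (Fin.ext hh)
    rcases lt_or_gt_of_ne hij' with hlt | hlt
    · exact Set.disjoint_left.1 (hd i.1 j.1 i.2 j.2 hlt) (hf i) (hij ▸ hf j)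
    · exact Set.disjoint_left.1 (hd j.1 i.1 j.2 i.2 hlt) (hf j) (hij ▸ hf i)
  simpa using Fintype.card_le_of_injective f hinj

lemma lt_length_of_mem_getD {P : List (Set Q)} {q : Q} {j : ℕ}
    (h : q ∈ P.getD j ∅) : j < P.length := by
  by_contra hge
  push_neg at hge
  rw [List.getD_eq_default _ _ hge] at h
  exact h

lemma mem_unionL_of_mem_getD {P : List (Set Q)} {q : Q} {j : ℕ}
    (h : q ∈ P.getD j ∅) : q ∈ unionL P := by
  have hj := lt_length_of_mem_getD h
  rw [List.getD_eq_getElem _ _ hj] at h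
  exact subset_unionL (List.getElem_mem hj) h

lemma maxRank_lt [Fintype Q] (A : NBW α Q) {P : List (Set Q)}
    (hP : P.length ≤ Fintype.card Q) (hn : 1 ≤ Fintype.card Q) (v : List α) (q : Q) :
    A.maxRank P v q < Fintype.card Q := by
  rw [NBW.maxRank]
  have hsub : ∀ j ∈ {j | ∃ p ∈ P.getD j ∅, A.Reach p v q}, j < P.length := by
    intro j hj
    obtain ⟨p, hp, _⟩ := hj
    exact lt_length_of_mem_getD hp
  rcases Set.eq_empty_or_nonempty {j | ∃ p ∈ P.getD j ∅, A.Reach p v q} with h | h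
  · rw [h, csSup_empty]
    simpa using Nat.pos_of_ne_zero (by omega : Fintype.card Q ≠ 0)
  · have hb : BddAbove {j | ∃ p ∈ P.getD j ∅, A.Reach p v q} :=
      ⟨P.length, fun j hj => (hsub j hj).le⟩
    exact lt_of_lt_of_le (hsub _ (Nat.sSup_mem h hb)) hP

lemma reach_nil {A : NBW α Q} {p q : Q} : A.Reach p [] q ↔ p = q := Iff.rfl

lemma maxRank_nil_eq (A : NBW α Q) {P : List (Set Q)} (hP : Good P) {q : Q} {j : ℕ}
    (hq : q ∈ P.getD j ∅) : A.maxRank P [] q = j := by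
  have hj := lt_length_of_mem_getD hq
  have hd := List.pairwise_iff_getElem.1 hP.2
  have hset : {i | ∃ p ∈ P.getD i ∅, A.Reach p [] q} = {j} := by
    ext i
    simp only [Set.mem_setOf_eq, Set.mem_singleton_iff]
    constructor
    · rintro ⟨p, hp, hreach⟩
      have hpq : p = q := hreach
      subst hpq
      have hi := lt_length_of_mem_getD hp
      by_contra hne
      rw [List.getD_eq_getElem _ _ hi] at hp
      rw [List.getD_eq_getElem _ _ hj] at hq
      rcases lt_or_gt_of_ne hne with hlt | hlt
      · exact Set.disjoint_left.1 (hd i j hi hj hlt) hp hq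
      · exact Set.disjoint_left.1 (hd j i hj hi hlt) hq hp
    · rintro rfl
      exact ⟨q, hq, rfl⟩
  rw [NBW.maxRank, hset, csSup_singleton]

lemma mem_getD_maxRank_nil (A : NBW α Q) {P : List (Set Q)} (hP : Good P) {q : Q}
    (hq : q ∈ unionL P) : q ∈ P.getD (A.maxRank P [] q) ∅ := by
  obtain ⟨S, hS, hqS⟩ := mem_unionL.1 hq
  obtain ⟨j, hj, rfl⟩ := List.mem_iff_getElem.1 hS
  have hmem : q ∈ P.getD j ∅ := by
    rw [List.getD_eq_getElem _ _ hj]; exact hqS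
  rw [maxRank_nil_eq A hP hmem]
  exact hmem

lemma eq_of_good (A : NBW α Q) {P₁ P₂ : List (Set Q)} (h₁ : Good P₁) (h₂ : Good P₂)
    (hu : unionL P₁ = unionL P₂)
    (hr : ∀ q, A.maxRank P₁ [] q = A.maxRank P₂ [] q) : P₁ = P₂ := by
  have key : ∀ j q, q ∈ P₁.getD j ∅ ↔ q ∈ P₂.getD j ∅ := by
    have aux : ∀ (Pa Pb : List (Set Q)), Good Pa → Good Pb →
        unionL Pa = unionL Pb → (∀ q, A.maxRank Pa [] q = A.maxRank Pb [] q) →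
        ∀ j q, q ∈ Pa.getD j ∅ → q ∈ Pb.getD j ∅ := by
      intro Pa Pb hGa hGb huab hrab j q h
      have hq1 : q ∈ unionL Pa := mem_unionL_of_mem_getD h
      have hq2 : q ∈ unionL Pb := huab ▸ hq1
      have hmem := mem_getD_maxRank_nil A hGb hq2
      rwa [← hrab, maxRank_nil_eq A hGa h] at hmem
    intro j q
    exact ⟨aux P₁ P₂ h₁ h₂ hu hr j q,
      aux P₂ P₁ h₂ h₁ hu.symm (fun q => (hr q).symm) j q⟩
  have hle : ∀ (Pa Pb : List (Set Q)), Good Pa →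
      (∀ j q, q ∈ Pa.getD j ∅ → q ∈ Pb.getD j ∅) → Pa.length ≤ Pb.length := by
    intro Pa Pb hGa hk
    rcases Nat.eq_zero_or_pos Pa.length with h0 | h0
    · omega
    · have hjlt : Pa.length - 1 < Pa.length := by omega
      obtain ⟨q, hq⟩ := hGa.1 _ (List.getElem_mem hjlt)
      have hmem : q ∈ Pa.getD (Pa.length - 1) ∅ := by
        rw [List.getD_eq_getElem _ _ hjlt]; exact hq
      have := lt_length_of_mem_getD (hk _ _ hmem)
      omega
  have hlen : P₁.length = P₂.length :=
    le_antisymm (hle P₁ P₂ h₁ (fun j q h => (key j q).1 h))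
      (hle P₂ P₁ h₂ (fun j q h => (key j q).2 h))
  apply List.ext_getElem hlen
  intro j hj1 hj2
  ext q
  have hk := key j q
  rwa [List.getD_eq_getElem _ _ hj1, List.getD_eq_getElem _ _ hj2] at hk

lemma oproClass_eq_of (A : NBW α Q) (u v₁ v₂ : List α)
    (h1 : A.δSet A.I (u ++ v₁) = A.δSet A.I (u ++ v₂))
    (h2 : ∀ q ∈ A.δSet A.I (u ++ v₁),
      A.maxRank (A.phi A.P0 u) v₁ q = A.maxRank (A.phi A.P0 u) v₂ q)
    (h3 : A.phi A.P0 (u ++ v₁) = A.phi A.P0 (u ++ v₂)) :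
    A.oproClass u v₁ = A.oproClass u v₂ := by
  ext x
  simp only [NBW.oproClass, NBW.oproEq, Set.mem_setOf_eq, NBW.oEq]
  constructor
  · rintro ⟨ha, hb⟩
    refine ⟨h3 ▸ ha, ?_⟩
    intro q hq
    rw [← h1] at hq
    rw [← h2 q hq]
    exact hb q hq
  · rintro ⟨ha, hb⟩
    refine ⟨h3.trans ha, ?_⟩
    intro q hq
    rw [h2 q hq]
    exact hb q (h1 ▸ hq)

end OproAux
/-- for every `u`, the relation `≈ᵒᵤ` has at most `nⁿ·(n+1)ⁿ`
equivalence classes, where `n ≥ 1` is the number of states. -/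
theorem oproEq_index_le {α Q : Type} [Fintype Q] (A : NBW α Q)
    (hn : 1 ≤ Fintype.card Q) (u : List α) :
    Cardinal.mk ↥(Set.range fun v : List α => A.oproClass u v) ≤
      ((Fintype.card Q ^ Fintype.card Q * (Fintype.card Q + 1) ^ Fintype.card Q : ℕ) :
        Cardinal) := by
  classical
  have hlen_u : (A.phi A.P0 u).length ≤ Fintype.card Q := (good_phi A u).length_le
  set g : List α → Q → Fin (Fintype.card Q + 1) := fun v q =>
    if q ∈ A.δSet A.I (u ++ v) then
      ⟨A.maxRank (A.phi A.P0 u) v q + 1, by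
        have := maxRank_lt A hlen_u hn v q
        omega⟩
    else ⟨0, by omega⟩ with hgdef
  set h : List α → Q → Fin (Fintype.card Q) := fun v q =>
    ⟨A.maxRank (A.phi A.P0 (u ++ v)) [] q,
      maxRank_lt A (good_phi A (u ++ v)).length_le hn [] q⟩ with hhdef
  have main : ∀ v₁ v₂ : List α, g v₁ = g v₂ → h v₁ = h v₂ →
      A.oproClass u v₁ = A.oproClass u v₂ := by
    intro v₁ v₂ hgg hhh
    have h1 : A.δSet A.I (u ++ v₁) = A.δSet A.I (u ++ v₂) := by
      ext q
      have hq := congrFun hgg q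
      simp only [hgdef] at hq
      constructor
      · intro hmem
        by_contra hmem2
        rw [if_pos hmem, if_neg hmem2] at hq
        have := congrArg Fin.val hq
        simp at this
      · intro hmem
        by_contra hmem2
        rw [if_neg hmem2, if_pos hmem] at hq
        have := congrArg Fin.val hq
        simp at this
    have h2 : ∀ q ∈ A.δSet A.I (u ++ v₁),
        A.maxRank (A.phi A.P0 u) v₁ q = A.maxRank (A.phi A.P0 u) v₂ q := by
      intro q hmem
      have hq := congrFun hgg q
      simp only [hgdef] at hq
      rw [if_pos hmem, if_pos (h1 ▸ hmem)] at hq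
      have := congrArg Fin.val hq
      simp only at this
      omega
    have h3 : A.phi A.P0 (u ++ v₁) = A.phi A.P0 (u ++ v₂) := by
      refine eq_of_good A (good_phi A _) (good_phi A _) ?_ ?_
      · rw [unionL_phi, unionL_phi]
        exact h1
      · intro q
        have hq := congrFun hhh q
        simp only [hhdef] at hq
        exact congrArg Fin.val hq
    exact oproClass_eq_of A u v₁ v₂ h1 h2 h3
  let F : ↥(Set.range fun v : List α => A.oproClass u v) →
      (Q → Fin (Fintype.card Q)) × (Q → Fin (Fintype.card Q + 1)) :=
    fun x => (h (Set.mem_range.mp x.2).choose, g (Set.mem_range.mp x.2).choose)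
  have hFinj : Function.Injective F := by
    intro x y hxy
    have hx := (Set.mem_range.mp x.2).choose_spec
    have hy := (Set.mem_range.mp y.2).choose_spec
    have hcls := main _ _ (congrArg Prod.snd hxy) (congrArg Prod.fst hxy)
    exact Subtype.ext (hx ▸ hy ▸ hcls)
  refine (Cardinal.mk_le_of_injective hFinj).trans_eq ?_
  rw [Cardinal.mk_fintype]
  norm_cast
  simp [Fintype.card_fun]
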